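/- arXiv:1609.01627 — 2 statements merged into one kernel-verified Lean document; each statement's English description precedes it below -/
import Mathlib

section
/- Under the hypotheses of the modified Krasnosel'skii–Mann theorem with additionally liminf λ_n > 0 and β_n → 1, the residuals satisfy ‖x_n - T x_n‖ → 0 as n → +∞. -/
/-!
The iterates stay bounded, since each step moves `x n` no farther from a fixed point `z` than
`max ‖x 0 - z‖ ‖z‖`. Comparing two consecutive steps gives
`‖x (n + 2) - x (n + 1)‖ ≤ β (n + 1) ‖x (n + 1) - x n‖ + c n` with `c` summable (it is controlled by
the variations of `β` and `λ`), so Xu's lemma and `∑ (1 - β n) = ∞` give `‖x (n + 1) - x n‖ → 0`.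
Since `x (n + 1) - β n x n = λ n (T (β n x n) - β n x n)`, `β n → 1` and `liminf λ n > 0`, the
residual at `β n x n`, and hence at `x n`, tends to `0`.
-/

open Filter Topology Finset

section XuLemma

variable {a γ c : ℕ → ℝ}

lemma le_prod_one_sub_mul_add_sum (hγ0 : ∀ n, 0 ≤ γ n) (hγ1 : ∀ n, γ n ≤ 1)
    (hc : ∀ n, 0 ≤ c n) (hrec : ∀ n, a (n + 1) ≤ (1 - γ n) * a n + c n) (n : ℕ) :
    a n ≤ (∏ k ∈ range n, (1 - γ k)) * a 0 + ∑ k ∈ range n, c k := by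
  induction n with
  | zero => simp
  | succ n ih =>
    have hS : 0 ≤ ∑ k ∈ range n, c k := sum_nonneg fun k _ => hc k
    rw [prod_range_succ, sum_range_succ]
    calc a (n + 1) ≤ (1 - γ n) * a n + c n := hrec n
      _ ≤ (1 - γ n) * ((∏ k ∈ range n, (1 - γ k)) * a 0 + ∑ k ∈ range n, c k) + c n := by
        gcongr; linarith [hγ1 n]
      _ ≤ _ := by nlinarith [hγ0 n]

lemma tendsto_prod_range_one_sub_zero (hγ0 : ∀ n, 0 ≤ γ n) (hγ1 : ∀ n, γ n ≤ 1)
    (hγ : ¬ Summable γ) : Tendsto (fun n => ∏ k ∈ range n, (1 - γ k)) atTop (𝓝 0) := by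
  have hexp : Tendsto (fun n => Real.exp (-∑ k ∈ range n, γ k)) atTop (𝓝 0) :=
    Real.tendsto_exp_atBot.comp (tendsto_neg_atTop_atBot.comp
      ((not_summable_iff_tendsto_nat_atTop_of_nonneg hγ0).1 hγ))
  refine squeeze_zero (fun n => prod_nonneg fun k _ => sub_nonneg.2 (hγ1 k)) (fun n => ?_) hexp
  rw [← sum_neg_distrib, Real.exp_sum]
  exact prod_le_prod (fun k _ => sub_nonneg.2 (hγ1 k))
    fun k _ => by linarith [Real.add_one_le_exp (-γ k)]

/-- Xu's lemma. -/
theorem tendsto_zero_of_le_one_sub_mul_add (ha : ∀ n, 0 ≤ a n) (hγ0 : ∀ n, 0 ≤ γ n)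
    (hγ1 : ∀ n, γ n ≤ 1) (hγ : ¬ Summable γ) (hc : ∀ n, 0 ≤ c n) (hcs : Summable c)
    (hrec : ∀ n, a (n + 1) ≤ (1 - γ n) * a n + c n) : Tendsto a atTop (𝓝 0) := by
  refine tendsto_order.2 ⟨fun b hb => .of_forall fun n => hb.trans_le (ha n), fun ε hε => ?_⟩
  obtain ⟨N, hN⟩ := ((tendsto_sum_nat_add c).eventually_lt_const (half_pos hε)).exists
  have hprod : ∀ᶠ n in atTop, (∏ k ∈ range n, (1 - γ (k + N))) * a N < ε / 2 := by
    have := (tendsto_prod_range_one_sub_zero (fun k => hγ0 (k + N)) (fun k => hγ1 (k + N))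
      ((summable_nat_add_iff N).not.2 hγ)).mul_const (a N)
    rw [zero_mul] at this
    exact this.eventually_lt_const (half_pos hε)
  rw [← map_add_atTop_eq_nat N]
  refine eventually_map.2 ?_
  filter_upwards [hprod] with n hn
  have htail : ∑ k ∈ range n, c (k + N) ≤ ∑' k, c (k + N) :=
    ((summable_nat_add_iff N).2 hcs).sum_le_tsum _ fun k _ => hc (k + N)
  have hbound := le_prod_one_sub_mul_add_sum (a := fun n => a (n + N)) (fun k => hγ0 (k + N))
    (fun k => hγ1 (k + N)) (fun k => hc (k + N))
    (fun k => by simpa [add_right_comm] using hrec (k + N)) n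
  simp only [zero_add] at hbound
  linarith

end XuLemma

lemma tendsto_zero_of_tendsto_mul_of_liminf_pos {α : Type*} {f : Filter α} {u l : α → ℝ}
    (hu : ∀ a, 0 ≤ u a) (hl : IsBoundedUnder (· ≥ ·) f l) (hlim : 0 < liminf l f)
    (h : Tendsto (fun a => l a * u a) f (𝓝 0)) : Tendsto u f (𝓝 0) := by
  have hδ : 0 < liminf l f / 2 := half_pos hlim
  refine squeeze_zero' (.of_forall hu) ?_ (by simpa using h.div_const (liminf l f / 2))
  filter_upwards [eventually_lt_of_lt_liminf (half_lt_self hlim) hl] with a ha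
  rw [le_div_iff₀ hδ]
  nlinarith [hu a]

section Nonexpansive

variable {E : Type*} [SeminormedAddCommGroup E] {T : E → E}

lemma norm_apply_sub_le_of_isFixedPt (hT : ∀ x y, ‖T x - T y‖ ≤ ‖x - y‖) {z : E} (hz : T z = z)
    (y : E) : ‖T y - y‖ ≤ 2 * ‖y - z‖ := by
  calc ‖T y - y‖ ≤ ‖T y - T z‖ + ‖y - z‖ := by
        simpa [hz, norm_sub_rev z y] using norm_sub_le_norm_sub_add_norm_sub (T y) z y
    _ ≤ 2 * ‖y - z‖ := by linarith [hT y z]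

lemma norm_sub_apply_le (hT : ∀ x y, ‖T x - T y‖ ≤ ‖x - y‖) (x y : E) :
    ‖x - T x‖ ≤ ‖y - T y‖ + 2 * ‖x - y‖ := by
  calc ‖x - T x‖ = ‖(x - y) + (y - T y) + (T y - T x)‖ := by congr 1; abel
    _ ≤ ‖x - y‖ + ‖y - T y‖ + ‖T y - T x‖ := norm_add₃_le
    _ ≤ ‖y - T y‖ + 2 * ‖x - y‖ := by linarith [hT y x, norm_sub_rev y x]

end Nonexpansive

section Relaxation

variable {E : Type*} [SeminormedAddCommGroup E] [NormedSpace ℝ E] {T : E → E}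

def relaxedMap (T : E → E) (l : ℝ) (y : E) : E := y + l • (T y - y)

lemma norm_relaxedMap_sub_relaxedMap_le (hT : ∀ x y, ‖T x - T y‖ ≤ ‖x - y‖) {l : ℝ}
    (hl0 : 0 ≤ l) (hl1 : l ≤ 1) (l' : ℝ) (y y' : E) :
    ‖relaxedMap T l y - relaxedMap T l' y'‖ ≤ ‖y - y'‖ + |l - l'| * ‖T y' - y'‖ := by
  have hsplit : relaxedMap T l y - relaxedMap T l' y'
      = (1 - l) • (y - y') + l • (T y - T y') + (l - l') • (T y' - y') := by
    simp only [relaxedMap]; module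
  calc _ ≤ ‖(1 - l) • (y - y')‖ + ‖l • (T y - T y')‖ + ‖(l - l') • (T y' - y')‖ := by
        rw [hsplit]; exact norm_add₃_le
    _ ≤ (1 - l) * ‖y - y'‖ + l * ‖y - y'‖ + |l - l'| * ‖T y' - y'‖ := by
        rw [norm_smul, norm_smul, norm_smul, Real.norm_of_nonneg (sub_nonneg.2 hl1),
          Real.norm_of_nonneg hl0, Real.norm_eq_abs]
        gcongr
        exact hT y y'
    _ = _ := by ring

lemma norm_relaxedMap_sub_self {l : ℝ} (hl : 0 ≤ l) (y : E) :
    ‖relaxedMap T l y - y‖ = l * ‖T y - y‖ := by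
  rw [relaxedMap, add_sub_cancel_left, norm_smul, Real.norm_of_nonneg hl]

lemma norm_relaxedMap_sub_le (hT : ∀ x y, ‖T x - T y‖ ≤ ‖x - y‖) {l : ℝ} (hl0 : 0 ≤ l)
    (hl1 : l ≤ 1) {z : E} (hz : T z = z) (y : E) : ‖relaxedMap T l y - z‖ ≤ ‖y - z‖ := by
  have hrz : relaxedMap T l z = z := by simp [relaxedMap, hz]
  simpa [hrz] using norm_relaxedMap_sub_relaxedMap_le hT hl0 hl1 l y z

end Relaxation

section Scaling

variable {E : Type*} [SeminormedAddCommGroup E] [NormedSpace ℝ E]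

lemma norm_smul_sub_le_max {b : ℝ} (hb0 : 0 ≤ b) (hb1 : b ≤ 1) (x z : E) :
    ‖b • x - z‖ ≤ max ‖x - z‖ ‖z‖ := by
  calc ‖b • x - z‖ = ‖b • (x - z) + (1 - b) • (-z)‖ := by congr 1; module
    _ ≤ b * ‖x - z‖ + (1 - b) * ‖z‖ := by
        refine (norm_add_le _ _).trans_eq ?_
        rw [norm_smul, norm_smul, norm_neg, Real.norm_of_nonneg hb0,
          Real.norm_of_nonneg (sub_nonneg.2 hb1)]
    _ ≤ max ‖x - z‖ ‖z‖ := by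
        linarith [mul_le_mul_of_nonneg_left (le_max_left ‖x - z‖ ‖z‖) hb0,
          mul_le_mul_of_nonneg_left (le_max_right ‖x - z‖ ‖z‖) (sub_nonneg.2 hb1)]

lemma norm_smul_sub_smul_le (b b' : ℝ) (x x' : E) :
    ‖b • x - b' • x'‖ ≤ |b| * ‖x - x'‖ + |b - b'| * ‖x'‖ := by
  calc ‖b • x - b' • x'‖ = ‖b • (x - x') + (b - b') • x'‖ := by congr 1; module
    _ ≤ _ := by
        simpa only [norm_smul, Real.norm_eq_abs] using norm_add_le (b • (x - x')) ((b - b') • x')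

lemma tendsto_norm_sub_smul_self {α : Type*} {l : Filter α} {b : α → ℝ} {x : α → E} {C : ℝ}
    (hb : Tendsto b l (𝓝 1)) (hx : ∀ a, ‖x a‖ ≤ C) :
    Tendsto (fun a => ‖x a - b a • x a‖) l (𝓝 0) := by
  have hb' : Tendsto (fun a => |1 - b a| * C) l (𝓝 0) := by
    simpa using ((tendsto_const_nhds (x := (1 : ℝ))).sub hb).abs.mul_const C
  refine squeeze_zero (fun a => norm_nonneg _) (fun a => ?_) hb'
  rw [show x a - b a • x a = (1 - b a) • x a by module, norm_smul, Real.norm_eq_abs]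
  exact mul_le_mul_of_nonneg_left (hx a) (abs_nonneg _)

end Scaling

section ModifiedKrasnoselskiiMann

variable {E : Type*} [SeminormedAddCommGroup E] [NormedSpace ℝ E] {T : E → E} {β lam : ℕ → ℝ}
  {x : ℕ → E}

lemma norm_modKM_sub_le (hT : ∀ x y, ‖T x - T y‖ ≤ ‖x - y‖) (hβ0 : ∀ n, 0 ≤ β n)
    (hβ1 : ∀ n, β n ≤ 1) (hl0 : ∀ n, 0 ≤ lam n) (hl1 : ∀ n, lam n ≤ 1)
    (hiter : ∀ n, x (n + 1) = relaxedMap T (lam n) (β n • x n)) {z : E} (hz : T z = z) (n : ℕ) :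
    ‖x n - z‖ ≤ max ‖x 0 - z‖ ‖z‖ := by
  induction n with
  | zero => exact le_max_left _ _
  | succ n ih =>
    calc ‖x (n + 1) - z‖ ≤ ‖β n • x n - z‖ :=
          hiter n ▸ norm_relaxedMap_sub_le hT (hl0 n) (hl1 n) hz _
      _ ≤ max ‖x n - z‖ ‖z‖ := norm_smul_sub_le_max (hβ0 n) (hβ1 n) _ _
      _ ≤ max ‖x 0 - z‖ ‖z‖ := max_le ih (le_max_right _ _)

lemma exists_bound_modKM (hT : ∀ x y, ‖T x - T y‖ ≤ ‖x - y‖) (hβ0 : ∀ n, 0 ≤ β n)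
    (hβ1 : ∀ n, β n ≤ 1) (hl0 : ∀ n, 0 ≤ lam n) (hl1 : ∀ n, lam n ≤ 1)
    (hiter : ∀ n, x (n + 1) = relaxedMap T (lam n) (β n • x n)) {z : E} (hz : T z = z) :
    ∃ C, (∀ n, ‖x n‖ ≤ C) ∧ ∀ n, ‖T (β n • x n) - β n • x n‖ ≤ C := by
  have hxz := norm_modKM_sub_le hT hβ0 hβ1 hl0 hl1 hiter hz
  set R := max ‖x 0 - z‖ ‖z‖
  have hzR : ‖z‖ ≤ R := le_max_right _ _
  refine ⟨2 * R + ‖z‖, fun n => ?_, fun n => ?_⟩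
  · linarith [norm_le_norm_add_norm_sub' (x n) z, hxz n, norm_nonneg z]
  · calc ‖T (β n • x n) - β n • x n‖ ≤ 2 * ‖β n • x n - z‖ :=
          norm_apply_sub_le_of_isFixedPt hT hz _
      _ ≤ 2 * R := by
          gcongr
          exact (norm_smul_sub_le_max (hβ0 n) (hβ1 n) _ _).trans (max_le (hxz n) hzR)
      _ ≤ 2 * R + ‖z‖ := le_add_of_nonneg_right (norm_nonneg z)

lemma norm_modKM_succ_succ_sub_le (hT : ∀ x y, ‖T x - T y‖ ≤ ‖x - y‖) (hβ0 : ∀ n, 0 ≤ β n)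
    (hl0 : ∀ n, 0 ≤ lam n) (hl1 : ∀ n, lam n ≤ 1)
    (hiter : ∀ n, x (n + 1) = relaxedMap T (lam n) (β n • x n)) {C D : ℝ} (hC : ∀ n, ‖x n‖ ≤ C)
    (hD : ∀ n, ‖T (β n • x n) - β n • x n‖ ≤ D) (n : ℕ) :
    ‖x (n + 2) - x (n + 1)‖ ≤
      β (n + 1) * ‖x (n + 1) - x n‖ + (|β (n + 1) - β n| * C + |lam (n + 1) - lam n| * D) := by
  calc ‖x (n + 2) - x (n + 1)‖
        = ‖relaxedMap T (lam (n + 1)) (β (n + 1) • x (n + 1))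
            - relaxedMap T (lam n) (β n • x n)‖ := by
        rw [← hiter, ← hiter]
    _ ≤ ‖β (n + 1) • x (n + 1) - β n • x n‖
          + |lam (n + 1) - lam n| * ‖T (β n • x n) - β n • x n‖ :=
        norm_relaxedMap_sub_relaxedMap_le hT (hl0 _) (hl1 _) _ _ _
    _ ≤ |β (n + 1)| * ‖x (n + 1) - x n‖ + |β (n + 1) - β n| * ‖x n‖
          + |lam (n + 1) - lam n| * D := by
        gcongr
        exacts [norm_smul_sub_smul_le _ _ _ _, hD n]
    _ ≤ _ := by
        rw [abs_of_nonneg (hβ0 _)]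
        linarith [mul_le_mul_of_nonneg_left (hC n) (abs_nonneg (β (n + 1) - β n))]

lemma tendsto_norm_modKM_succ_sub (hT : ∀ x y, ‖T x - T y‖ ≤ ‖x - y‖) (hβ0 : ∀ n, 0 ≤ β n)
    (hβ1 : ∀ n, β n ≤ 1) (hβdiv : ¬ Summable fun n => 1 - β n)
    (hβvar : Summable fun n => |β (n + 1) - β n|) (hl0 : ∀ n, 0 ≤ lam n) (hl1 : ∀ n, lam n ≤ 1)
    (hlamvar : Summable fun n => |lam (n + 1) - lam n|)
    (hiter : ∀ n, x (n + 1) = relaxedMap T (lam n) (β n • x n)) {C D : ℝ} (hC : ∀ n, ‖x n‖ ≤ C)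
    (hD : ∀ n, ‖T (β n • x n) - β n • x n‖ ≤ D) :
    Tendsto (fun n => ‖x (n + 1) - x n‖) atTop (𝓝 0) := by
  have hC0 : 0 ≤ C := (norm_nonneg _).trans (hC 0)
  have hD0 : 0 ≤ D := (norm_nonneg _).trans (hD 0)
  exact tendsto_zero_of_le_one_sub_mul_add (γ := fun n => 1 - β (n + 1)) (fun n => norm_nonneg _)
    (fun n => sub_nonneg.2 (hβ1 _)) (fun n => sub_le_self _ (hβ0 _))
    ((summable_nat_add_iff 1).not.2 hβdiv) (fun n => by positivity)
    ((hβvar.mul_right C).add (hlamvar.mul_right D)) fun n => by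
      rw [sub_sub_cancel]; exact norm_modKM_succ_succ_sub_le hT hβ0 hl0 hl1 hiter hC hD n

lemma tendsto_norm_apply_sub_modKM (hl0 : ∀ n, 0 ≤ lam n) (hlaminf : 0 < liminf lam atTop)
    (hiter : ∀ n, x (n + 1) = relaxedMap T (lam n) (β n • x n))
    (hreg : Tendsto (fun n => ‖x (n + 1) - x n‖) atTop (𝓝 0))
    (hgap : Tendsto (fun n => ‖x n - β n • x n‖) atTop (𝓝 0)) :
    Tendsto (fun n => ‖T (β n • x n) - β n • x n‖) atTop (𝓝 0) := by
  refine tendsto_zero_of_tendsto_mul_of_liminf_pos (fun n => norm_nonneg _)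
    (isBoundedUnder_of ⟨0, hl0⟩) hlaminf ?_
  refine squeeze_zero (fun n => mul_nonneg (hl0 n) (norm_nonneg _)) (fun n => ?_)
    (by simpa using hreg.add hgap)
  rw [← norm_relaxedMap_sub_self (hl0 n), ← hiter]
  exact norm_sub_le_norm_sub_add_norm_sub _ _ _

end ModifiedKrasnoselskiiMann

theorem modKM_residual_to_zero_general
    {H : Type*} [NormedAddCommGroup H] [InnerProductSpace ℝ H]
    (T : H → H) (hT : ∀ x y : H, ‖T x - T y‖ ≤ ‖x - y‖)
    (hfix_ne : {z : H | T z = z}.Nonempty)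
    (β lam : ℕ → ℝ)
    (hβ : ∀ n, 0 < β n ∧ β n ≤ 1)
    (hβlim : Tendsto β atTop (nhds 1))
    (hβdiv : ¬ Summable (fun n => 1 - β n))
    (hβvar : Summable (fun n => |β (n + 1) - β n|))
    (hlam : ∀ n, 0 < lam n ∧ lam n ≤ 1)
    (hlaminf : 0 < Filter.liminf lam Filter.atTop)
    (hlamvar : Summable (fun n => |lam (n + 1) - lam n|))
    (x : ℕ → H)
    (hiter : ∀ n, x (n + 1) = β n • x n + lam n • (T (β n • x n) - β n • x n)) :
    Tendsto (fun n => ‖x n - T (x n)‖) atTop (nhds 0) := by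
  obtain ⟨z, hz⟩ := hfix_ne
  have hstep : ∀ n, x (n + 1) = relaxedMap T (lam n) (β n • x n) := hiter
  have hβ0 : ∀ n, 0 ≤ β n := fun n => (hβ n).1.le
  have hβ1 : ∀ n, β n ≤ 1 := fun n => (hβ n).2
  have hl0 : ∀ n, 0 ≤ lam n := fun n => (hlam n).1.le
  have hl1 : ∀ n, lam n ≤ 1 := fun n => (hlam n).2
  obtain ⟨C, hC, hD⟩ := exists_bound_modKM hT hβ0 hβ1 hl0 hl1 hstep hz
  have hreg := tendsto_norm_modKM_succ_sub hT hβ0 hβ1 hβdiv hβvar hl0 hl1 hlamvar hstep hC hD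
  have hgap := tendsto_norm_sub_smul_self hβlim hC
  have hres := tendsto_norm_apply_sub_modKM hl0 hlaminf hstep hreg hgap
  refine squeeze_zero (fun n => norm_nonneg _) (fun n => norm_sub_apply_le hT (x n) (β n • x n)) ?_
  simpa [norm_sub_rev] using hres.add (hgap.const_mul 2)

/-- In the modified Krasnosel'skii–Mann algorithm, the residuals
satisfy `‖x n - T (x n)‖ → 0`. -/
theorem modKM_residual_to_zero
    {H : Type*} [NormedAddCommGroup H] [InnerProductSpace ℝ H] [CompleteSpace H]
    (T : H → H) (hT : ∀ x y : H, ‖T x - T y‖ ≤ ‖x - y‖)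
    (hfix_ne : {z : H | T z = z}.Nonempty)
    (β lam : ℕ → ℝ)
    (hβ : ∀ n, 0 < β n ∧ β n ≤ 1)
    (hβlim : Tendsto β atTop (nhds 1))
    (hβdiv : ¬ Summable (fun n => 1 - β n))
    (hβvar : Summable (fun n => |β (n + 1) - β n|))
    (hlam : ∀ n, 0 < lam n ∧ lam n ≤ 1)
    (hlaminf : 0 < Filter.liminf lam Filter.atTop)
    (hlamvar : Summable (fun n => |lam (n + 1) - lam n|))
    (x : ℕ → H)
    (hiter : ∀ n, x (n + 1) = β n • x n + lam n • (T (β n • x n) - β n • x n)) :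
    Tendsto (fun n => ‖x n - T (x n)‖) atTop (nhds 0) :=
  modKM_residual_to_zero_general T hT hfix_ne β lam hβ hβlim hβdiv hβvar hlam hlaminf hlamvar x
    hiter
end

section
/- Let A, B : H ⇉ H be maximally monotone operators with zer(A+B) ≠ ∅ and γ > 0. The Douglas–Rachford-type iteration y_n = J_{γB}(β_n x_n), z_n = J_{γA}(2y_n - β_n x_n), x_{n+1} = β_n x_n + λ_n(z_n - y_n), with parameters 0 < β_n ≤ 1, β_n → 1, ∑(1-β_n) = ∞, ∑|β_n - β_{n-1}| < ∞, 0 < λ_n ≤ 2, liminf λ_n > 0, ∑|λ_n - λ_{n-1}| < ∞, generates (x_n) converging strongly to x̄ := proj_{Fix(R_{γA}R_{γB})}(0), and (y_n), (z_n) both converge strongly to J_{γB}(x̄) ∈ zer(A+B). -/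
open Filter Topology Pointwise RealInnerProductSpace

section
variable {H : Type*} [NormedAddCommGroup H] [InnerProductSpace ℝ H]

/-- A set-valued operator is monotone. -/
def MonotoneOp (A : H → Set H) : Prop :=
  ∀ x y u v : H, u ∈ A x → v ∈ A y → 0 ≤ ⟪x - y, u - v⟫

/-- A set-valued operator is maximally monotone. -/
def MaximallyMonotoneOp (A : H → Set H) : Prop :=
  MonotoneOp A ∧ ∀ x u : H, (∀ y v : H, v ∈ A y → 0 ≤ ⟪x - y, u - v⟫) → u ∈ A x

end

/-!
With `T = R_{γA} ∘ R_{γB}` nonexpansive, the iteration is the relaxed (Krasnosel'skiĭ–Mann)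
iteration `x (n+1) = relax T (λ n / 2) (β n • x n)` with Tikhonov factors `β n`, and the fixed
point equation `T x̄ = x̄` says `J_{γA} (R_{γB} x̄) = J_{γB} x̄`, which makes `J_{γB} x̄` a zero
of `A + B`.

Xu's lemma applied to `‖x (n+1) - x n‖`, fed by the summable variations of `β` and `λ`, gives
asymptotic regularity, hence `‖β n • x n - T (β n • x n)‖ → 0`. The minimal-norm fixed point `x̄`
is the limit of the Tikhonov path `T z_s = (1 + s) z_s` as `s → 0` (Browder), and monotonicity of
`Id - T` at `z_s` yields `limsup ⟪x̄, x̄ - β n • x n⟫ ≤ 0` without any weak compactness. A second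
application of Xu's lemma, to `‖x n - x̄‖²`, gives strong convergence, and `y n`, `z n` follow by
continuity of the resolvents.
-/

theorem tendsto_prod_one_sub_of_not_summable {t : ℕ → ℝ} (ht₀ : ∀ n, 0 ≤ t n)
    (ht₁ : ∀ n, t n ≤ 1) (ht : ¬ Summable t) :
    Tendsto (fun k => ∏ j ∈ Finset.range k, (1 - t j)) atTop (𝓝 0) := by
  have hexp : Tendsto (fun k => Real.exp (-∑ j ∈ Finset.range k, t j)) atTop (𝓝 0) :=
    Real.tendsto_exp_atBot.comp <| tendsto_neg_atTop_atBot.comp <|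
      (not_summable_iff_tendsto_nat_atTop_of_nonneg ht₀).1 ht
  refine squeeze_zero (fun k => Finset.prod_nonneg fun j _ => sub_nonneg.2 (ht₁ j))
    (fun k => ?_) hexp
  rw [← Finset.sum_neg_distrib, Real.exp_sum]
  exact Finset.prod_le_prod (fun j _ => sub_nonneg.2 (ht₁ j))
    fun j _ => by linarith [Real.add_one_le_exp (-t j)]

/-- Xu's lemma. -/
theorem tendsto_zero_of_le_one_sub_mul_add_s13 {a t b c : ℕ → ℝ} (ha : ∀ n, 0 ≤ a n)
    (ht₀ : ∀ n, 0 ≤ t n) (ht₁ : ∀ n, t n ≤ 1) (ht : ¬ Summable t)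
    (hb : ∀ ε > 0, ∀ᶠ n in atTop, b n ≤ ε) (hc₀ : ∀ n, 0 ≤ c n) (hc : Summable c)
    (hrec : ∀ n, a (n + 1) ≤ (1 - t n) * a n + t n * b n + c n) :
    Tendsto a atTop (𝓝 0) := by
  rw [Metric.tendsto_atTop]
  intro ε hε
  obtain ⟨N₁, hN₁⟩ := (hb (ε / 3) (by positivity)).exists_forall_of_atTop
  obtain ⟨N₂, hN₂⟩ := ((tendsto_sum_nat_add c).eventually_lt_const
    (by positivity : (0 : ℝ) < ε / 3)).exists_forall_of_atTop
  set N := max N₁ N₂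
  have htail : ∀ k, ∑ j ∈ Finset.range k, c (N + j) ≤ ε / 3 := fun k => by
    calc ∑ j ∈ Finset.range k, c (N + j) ≤ ∑' j, c (j + N) := by
          simpa only [add_comm] using
            ((summable_nat_add_iff N).2 hc).sum_le_tsum _ fun j _ => hc₀ _
      _ ≤ ε / 3 := (hN₂ N (le_max_right _ _)).le
  set P := fun k => ∏ j ∈ Finset.range k, (1 - t (N + j))
  have hunroll : ∀ k, a (N + k) ≤ P k * a N + ε / 3 + ∑ j ∈ Finset.range k, c (N + j) := by
    intro k
    induction k with
    | zero =>
      simp only [P, add_zero, Finset.prod_range_zero, one_mul, Finset.sum_range_zero]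
      linarith
    | succ k ih =>
      have hbk : b (N + k) ≤ ε / 3 := hN₁ _ (le_trans (le_max_left _ _) (Nat.le_add_right _ _))
      have hS : 0 ≤ ∑ j ∈ Finset.range k, c (N + j) := Finset.sum_nonneg fun j _ => hc₀ _
      have h1t : 0 ≤ 1 - t (N + k) := sub_nonneg.2 (ht₁ _)
      calc a (N + k + 1) ≤ (1 - t (N + k)) * a (N + k) + t (N + k) * (ε / 3) + c (N + k) := by
            have := mul_le_mul_of_nonneg_left hbk (ht₀ (N + k))
            linarith [hrec (N + k)]
        _ ≤ (1 - t (N + k)) * (P k * a N + ε / 3 + ∑ j ∈ Finset.range k, c (N + j))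
            + t (N + k) * (ε / 3) + c (N + k) := by gcongr
        _ ≤ P (k + 1) * a N + ε / 3 + ∑ j ∈ Finset.range (k + 1), c (N + j) := by
            simp only [P, Finset.prod_range_succ, Finset.sum_range_succ]
            nlinarith [mul_nonneg (ht₀ (N + k)) hS]
  have hPt : ¬ Summable fun j => t (N + j) := by
    simpa only [add_comm N] using (summable_nat_add_iff N).not.2 ht
  obtain ⟨K, hK⟩ := (((tendsto_prod_one_sub_of_not_summable (fun j => ht₀ _)
    (fun j => ht₁ _) hPt).mul_const (a N)).eventually_lt_const
      (by rw [zero_mul]; positivity : 0 * a N < ε / 3)).exists_forall_of_atTop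
  refine ⟨N + K, fun n hn => ?_⟩
  obtain ⟨k, rfl⟩ : ∃ k, n = N + k := ⟨n - N, by omega⟩
  rw [Real.dist_0_eq_abs, abs_of_nonneg (ha _)]
  have hPk : P k * a N < ε / 3 := hK k (by omega)
  linarith [hunroll k, htail k]

theorem LipschitzWith.norm_map_sub_le {E : Type*} [SeminormedAddCommGroup E] {T : E → E}
    (hT : LipschitzWith 1 T) (u v : E) : ‖T u - T v‖ ≤ ‖u - v‖ := by
  simpa using hT.norm_sub_le u v

def relax {E : Type*} [AddCommGroup E] [Module ℝ E] (T : E → E) (α : ℝ) (u : E) : E :=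
  u + α • (T u - u)

section Relax

variable {E : Type*} [SeminormedAddCommGroup E] [NormedSpace ℝ E] {T : E → E}

theorem relax_sub_relax_right (α α' : ℝ) (u : E) :
    relax T α u - relax T α' u = (α - α') • (T u - u) := by
  simp only [relax]; module

theorem relax_sub_self (α : ℝ) (u : E) : relax T α u - u = α • (T u - u) :=
  add_sub_cancel_left _ _

theorem relax_eq_self_of_map_eq {p : E} (hp : T p = p) (α : ℝ) : relax T α p = p := by
  simp [relax, hp]

theorem LipschitzWith.norm_relax_sub_le (hT : LipschitzWith 1 T) {α : ℝ} (hα₀ : 0 ≤ α)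
    (hα₁ : α ≤ 1) (u v : E) : ‖relax T α u - relax T α v‖ ≤ ‖u - v‖ := by
  have hrw : relax T α u - relax T α v = (1 - α) • (u - v) + α • (T u - T v) := by
    simp only [relax]; module
  rw [hrw]
  refine (norm_add_le _ _).trans ?_
  rw [norm_smul, norm_smul, Real.norm_of_nonneg (sub_nonneg.2 hα₁), Real.norm_of_nonneg hα₀]
  nlinarith [hT.norm_map_sub_le u v]

theorem norm_smul_sub_le_of_le {β M : ℝ} (hβ₀ : 0 ≤ β) (hβ₁ : β ≤ 1) {v p : E}
    (hv : ‖v - p‖ ≤ M) (hp : ‖p‖ ≤ M) : ‖β • v - p‖ ≤ M := by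
  have hrw : β • v - p = β • (v - p) + (1 - β) • (-p) := by module
  rw [hrw]
  refine (norm_add_le _ _).trans ?_
  rw [norm_smul, norm_smul, norm_neg, Real.norm_of_nonneg hβ₀,
    Real.norm_of_nonneg (sub_nonneg.2 hβ₁)]
  nlinarith

end Relax

section TikhonovRelaxation

variable {E : Type*} [SeminormedAddCommGroup E] [NormedSpace ℝ E] {T : E → E} {p : E}
  {α β : ℕ → ℝ} {x : ℕ → E}
  (hT : LipschitzWith 1 T) (hp : T p = p) (hβ : ∀ n, 0 ≤ β n ∧ β n ≤ 1)
  (hα : ∀ n, 0 ≤ α n ∧ α n ≤ 1) (hx : ∀ n, x (n + 1) = relax T (α n) (β n • x n))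
include hT hp hα hx

theorem norm_succ_sub_le_of_tikhonov_relax (n : ℕ) : ‖x (n + 1) - p‖ ≤ ‖β n • x n - p‖ := by
  simpa only [hx, relax_eq_self_of_map_eq hp] using
    hT.norm_relax_sub_le (hα n).1 (hα n).2 (β n • x n) p

include hβ

theorem norm_sub_le_max_of_tikhonov_relax (n : ℕ) : ‖x n - p‖ ≤ max ‖x 0 - p‖ ‖p‖ := by
  induction n with
  | zero => exact le_max_left _ _
  | succ n ih =>
    exact (norm_succ_sub_le_of_tikhonov_relax hT hp hα hx n).trans
      (norm_smul_sub_le_of_le (hβ n).1 (hβ n).2 ih (le_max_right _ _))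

theorem norm_map_sub_le_of_tikhonov_relax (n : ℕ) :
    ‖T (β n • x n) - β n • x n‖ ≤ 2 * max ‖x 0 - p‖ ‖p‖ := by
  have hw := norm_smul_sub_le_of_le (hβ n).1 (hβ n).2
    (norm_sub_le_max_of_tikhonov_relax hT hp hβ hα hx n) (le_max_right _ _)
  calc ‖T (β n • x n) - β n • x n‖ = ‖(T (β n • x n) - T p) + (p - β n • x n)‖ := by
        rw [hp, sub_add_sub_cancel]
    _ ≤ ‖β n • x n - p‖ + ‖β n • x n - p‖ := by
        refine (norm_add_le _ _).trans ?_
        rw [norm_sub_rev p]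
        gcongr
        exact hT.norm_map_sub_le _ _
    _ ≤ _ := by linarith

theorem norm_le_of_tikhonov_relax (n : ℕ) : ‖x n‖ ≤ max ‖x 0 - p‖ ‖p‖ + ‖p‖ :=
  (norm_le_norm_add_norm_sub' (x n) p).trans
    (by linarith [norm_sub_le_max_of_tikhonov_relax hT hp hβ hα hx n])

theorem tendsto_norm_succ_sub_of_tikhonov_relax (hβ_div : ¬ Summable fun n => 1 - β n)
    (hβ_var : Summable fun n => |β (n + 1) - β n|)
    (hα_var : Summable fun n => |α (n + 1) - α n|) :
    Tendsto (fun n => ‖x (n + 1) - x n‖) atTop (𝓝 0) := by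
  set M := max ‖x 0 - p‖ ‖p‖
  refine tendsto_zero_of_le_one_sub_mul_add_s13 (t := fun n => 1 - β (n + 1)) (b := 0)
    (c := fun n => |β (n + 1) - β n| * (M + ‖p‖) + |α (n + 1) - α n| * (2 * M))
    (fun n => norm_nonneg _) (fun n => sub_nonneg.2 (hβ _).2)
    (fun n => by linarith [(hβ (n + 1)).1])
    ((summable_nat_add_iff 1).not.2 hβ_div) (fun ε hε => Eventually.of_forall fun _ => hε.le)
    (fun n => by positivity) ((hβ_var.mul_right _).add (hα_var.mul_right _)) fun n => ?_
  have hw : ‖β (n + 1) • x (n + 1) - β n • x n‖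
      ≤ β (n + 1) * ‖x (n + 1) - x n‖ + |β (n + 1) - β n| * ‖x n‖ := by
    rw [show β (n + 1) • x (n + 1) - β n • x n
        = β (n + 1) • (x (n + 1) - x n) + (β (n + 1) - β n) • x n by module]
    refine (norm_add_le _ _).trans_eq ?_
    rw [norm_smul, norm_smul, Real.norm_of_nonneg (hβ _).1, Real.norm_eq_abs]
  have hstep : x (n + 1 + 1) - x (n + 1)
      = (relax T (α (n + 1)) (β (n + 1) • x (n + 1)) - relax T (α (n + 1)) (β n • x n))
        + (α (n + 1) - α n) • (T (β n • x n) - β n • x n) := by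
    rw [hx, hx, ← relax_sub_relax_right]; abel
  rw [hstep, Pi.zero_apply, mul_zero, add_zero, sub_sub_cancel]
  refine (norm_add_le _ _).trans ?_
  rw [norm_smul, Real.norm_eq_abs]
  have h₁ := hT.norm_relax_sub_le (hα (n + 1)).1 (hα (n + 1)).2
    (β (n + 1) • x (n + 1)) (β n • x n)
  have h₂ := mul_le_mul_of_nonneg_left (norm_map_sub_le_of_tikhonov_relax hT hp hβ hα hx n)
    (abs_nonneg (α (n + 1) - α n))
  have h₃ := mul_le_mul_of_nonneg_left (norm_le_of_tikhonov_relax hT hp hβ hα hx n)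
    (abs_nonneg (β (n + 1) - β n))
  linarith

theorem tendsto_norm_sub_map_of_tikhonov_relax (hβ_lim : Tendsto β atTop (𝓝 1))
    (hβ_div : ¬ Summable fun n => 1 - β n) (hβ_var : Summable fun n => |β (n + 1) - β n|)
    (hα_var : Summable fun n => |α (n + 1) - α n|) {δ : ℝ} (hδ : 0 < δ)
    (hαδ : ∀ᶠ n in atTop, δ ≤ α n) :
    Tendsto (fun n => ‖β n • x n - T (β n • x n)‖) atTop (𝓝 0) := by
  set M := max ‖x 0 - p‖ ‖p‖ + ‖p‖
  have hbound : Tendsto (fun n => (‖x (n + 1) - x n‖ + (1 - β n) * M) / δ) atTop (𝓝 0) := by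
    simpa using ((tendsto_norm_succ_sub_of_tikhonov_relax hT hp hβ hα hx hβ_div hβ_var
      hα_var).add (((tendsto_const_nhds (x := (1 : ℝ))).sub hβ_lim).mul_const M)).div_const δ
  refine squeeze_zero' (Eventually.of_forall fun n => norm_nonneg _)
    (hαδ.mono fun n hn => ?_) hbound
  have hstep : α n * ‖T (β n • x n) - β n • x n‖ ≤ ‖x (n + 1) - x n‖ + (1 - β n) * M := by
    rw [← Real.norm_of_nonneg (hα n).1, ← norm_smul, ← relax_sub_self, ← hx,
      show x (n + 1) - β n • x n = (x (n + 1) - x n) + (1 - β n) • x n by module]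
    refine (norm_add_le _ _).trans ?_
    rw [norm_smul, Real.norm_of_nonneg (sub_nonneg.2 (hβ n).2)]
    gcongr
    · exact sub_nonneg.2 (hβ n).2
    · exact norm_le_of_tikhonov_relax hT hp hβ hα hx n
  rw [le_div_iff₀ hδ, norm_sub_rev]
  nlinarith [norm_nonneg (T (β n • x n) - β n • x n)]

end TikhonovRelaxation

section Nonexpansive

variable {H : Type*} [NormedAddCommGroup H] [InnerProductSpace ℝ H] {T : H → H}

theorem LipschitzWith.inner_sub_map_nonneg (hT : LipschitzWith 1 T) (u v : H) :
    0 ≤ ⟪(u - T u) - (v - T v), u - v⟫ := by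
  have hrw : (u - T u) - (v - T v) = (u - v) - (T u - T v) := by abel
  rw [hrw, inner_sub_left, real_inner_self_eq_norm_sq, sub_nonneg, sq]
  exact (real_inner_le_norm _ _).trans
    (mul_le_mul_of_nonneg_right (hT.norm_map_sub_le u v) (norm_nonneg _))

/-- The points with `T z = (1 + s) • z` are the zeros of the Tikhonov regularization
`(Id - T) + s • Id` of the monotone operator `Id - T`. -/
theorem LipschitzWith.exists_map_eq_one_add_smul [CompleteSpace H] (hT : LipschitzWith 1 T)
    {s : ℝ} (hs : 0 < s) : ∃ z, T z = (1 + s) • z := by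
  have hc : ‖(1 + s)⁻¹‖₊ < 1 := by
    rw [← NNReal.coe_lt_coe, coe_nnnorm, Real.norm_eq_abs, abs_inv,
      abs_of_pos (by linarith), NNReal.coe_one]
    exact inv_lt_one_of_one_lt₀ (by linarith)
  have hcontr : ContractingWith ‖(1 + s)⁻¹‖₊ (fun u => (1 + s)⁻¹ • T u) :=
    ⟨hc, by rw [← mul_one ‖(1 + s)⁻¹‖₊]; exact (lipschitzWith_smul _).comp hT⟩
  refine ⟨ContractingWith.fixedPoint _ hcontr, ?_⟩
  have hfix := hcontr.fixedPoint_isFixedPt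
  conv_rhs => rw [← hfix.eq, smul_smul, mul_inv_cancel₀ (by linarith), one_smul]

theorem LipschitzWith.norm_sub_sq_le_of_map_eq_one_add_smul (hT : LipschitzWith 1 T)
    {s s' : ℝ} {z z' : H} (hs' : 0 ≤ s') (hss' : s' < s)
    (hz : T z = (1 + s) • z) (hz' : T z' = (1 + s') • z') :
    ‖z - z'‖ ^ 2 ≤ ‖z'‖ ^ 2 - ‖z‖ ^ 2 := by
  have hmono := hT.inner_sub_map_nonneg z z'
  have hrw : (z - T z) - (z' - T z') = s' • z' - s • z := by rw [hz, hz']; module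
  rw [hrw, inner_sub_left, real_inner_smul_left, real_inner_smul_left] at hmono
  have hsplit : ⟪z', z - z'⟫ = ⟪z, z - z'⟫ - ‖z - z'‖ ^ 2 := by
    calc ⟪z', z - z'⟫ = ⟪z - (z - z'), z - z'⟫ := by rw [sub_sub_cancel]
      _ = ⟪z, z - z'⟫ - ‖z - z'‖ ^ 2 := by rw [inner_sub_left, real_inner_self_eq_norm_sq]
  have hQ : ⟪z, z - z'⟫ ≤ 0 := by nlinarith [sq_nonneg ‖z - z'‖]
  have hid : ‖z'‖ ^ 2 - ‖z‖ ^ 2 - ‖z - z'‖ ^ 2 = -2 * ⟪z, z - z'⟫ := by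
    rw [norm_sub_sq_real, inner_sub_right, real_inner_self_eq_norm_sq]; ring
  linarith

theorem LipschitzWith.inner_le_of_map_eq_one_add_smul (hT : LipschitzWith 1 T)
    {s : ℝ} {z : H} (hz : T z = (1 + s) • z) (u : H) :
    s * ⟪z, z - u⟫ ≤ ‖u - T u‖ * ‖z - u‖ := by
  have hmono := hT.inner_sub_map_nonneg z u
  have hrw : (z - T z) - (u - T u) = -(s • z) - (u - T u) := by rw [hz]; module
  rw [hrw, inner_sub_left, inner_neg_left, real_inner_smul_left] at hmono
  linarith [neg_le_of_abs_le (abs_real_inner_le_norm (u - T u) (z - u))]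

/-- Browder's theorem. -/
theorem LipschitzWith.tendsto_of_map_eq_one_add_smul [CompleteSpace H] (hT : LipschitzWith 1 T)
    {p : H} (hp : T p = p) (hpmin : ∀ q, T q = q → ‖p‖ ≤ ‖q‖)
    {s : ℕ → ℝ} (hs : StrictAnti s) (hs₀ : ∀ k, 0 < s k) (hs_lim : Tendsto s atTop (𝓝 0))
    {z : ℕ → H} (hz : ∀ k, T (z k) = (1 + s k) • z k) :
    Tendsto z atTop (𝓝 p) := by
  have hp' : T p = (1 + 0 : ℝ) • p := by rw [add_zero, one_smul, hp]
  have hnear : ∀ k, ‖z k - p‖ ^ 2 ≤ ‖p‖ ^ 2 - ‖z k‖ ^ 2 := fun k =>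
    hT.norm_sub_sq_le_of_map_eq_one_add_smul le_rfl (hs₀ k) (hz k) hp'
  have hstep : ∀ {k m}, k < m → ‖z k - z m‖ ^ 2 ≤ ‖z m‖ ^ 2 - ‖z k‖ ^ 2 := fun hkm =>
    hT.norm_sub_sq_le_of_map_eq_one_add_smul (hs₀ _).le (hs hkm) (hz _) (hz _)
  have hmono : Monotone fun k => ‖z k‖ ^ 2 := monotone_nat_of_le_succ fun k => by
    linarith [hstep k.lt_succ_self, sq_nonneg ‖z k - z (k + 1)‖]
  have hbdd : BddAbove (Set.range fun k => ‖z k‖ ^ 2) :=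
    ⟨‖p‖ ^ 2, by rintro _ ⟨k, rfl⟩; linarith [hnear k, sq_nonneg ‖z k - p‖]⟩
  have hcauchy : CauchySeq z := by
    rw [Metric.cauchySeq_iff']
    intro ε hε
    obtain ⟨N, hN⟩ := Metric.tendsto_atTop.1 (tendsto_atTop_ciSup hmono hbdd) (ε ^ 2)
      (by positivity)
    refine ⟨N, fun n hn => lt_of_pow_lt_pow_left₀ 2 hε.le ?_⟩
    rcases hn.lt_or_eq with hNn | rfl
    · have hle := le_ciSup hbdd n
      have hN' := (abs_lt.1 (hN N le_rfl)).1
      rw [dist_eq_norm, norm_sub_rev]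
      linarith [hstep hNn]
    · simpa using pow_pos hε 2
  obtain ⟨q, hq⟩ := cauchySeq_tendsto_of_complete hcauchy
  have hTq : T q = q := by
    refine tendsto_nhds_unique ((hT.continuous.tendsto q).comp hq) ?_
    simpa [Function.comp_def, hz] using
      ((tendsto_const_nhds (x := (1 : ℝ))).add hs_lim).smul hq
  have hqp : ‖q - p‖ ^ 2 ≤ ‖p‖ ^ 2 - ‖q‖ ^ 2 :=
    le_of_tendsto_of_tendsto' (((hq.sub_const p).norm).pow 2)
      (tendsto_const_nhds.sub (hq.norm.pow 2)) hnear
  have hpq := pow_le_pow_left₀ (norm_nonneg _) (hpmin q hTq) 2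
  have hqp' : q = p := by
    rw [← sub_eq_zero, ← norm_eq_zero, ← pow_eq_zero_iff two_ne_zero]
    exact le_antisymm (by linarith) (sq_nonneg _)
  rwa [← hqp']

/-- This replaces the demiclosedness principle: `p` is compared with a nearby point of the
Tikhonov path. -/
theorem LipschitzWith.eventually_inner_sub_le [CompleteSpace H] (hT : LipschitzWith 1 T)
    {p : H} (hp : T p = p) (hpmin : ∀ q, T q = q → ‖p‖ ≤ ‖q‖) {u : ℕ → H} {R : ℝ}
    (hu : ∀ n, ‖u n‖ ≤ R) (hres : Tendsto (fun n => ‖u n - T (u n)‖) atTop (𝓝 0)) :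
    ∀ ε > 0, ∀ᶠ n in atTop, ⟪p, p - u n⟫ ≤ ε := by
  intro ε hε
  choose z hz using fun k : ℕ => hT.exists_map_eq_one_add_smul (s := 1 / ((k : ℝ) + 1))
    (by positivity)
  have hzp : Tendsto z atTop (𝓝 p) :=
    hT.tendsto_of_map_eq_one_add_smul hp hpmin
      (fun _ _ hkm => Nat.one_div_lt_one_div hkm)
      (fun k => by positivity) tendsto_one_div_add_atTop_nhds_zero_nat hz
  have hclose : Tendsto (fun k => ‖p - z k‖ * (‖p‖ + R + ‖z k‖)) atTop (𝓝 0) := by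
    simpa using (((tendsto_const_nhds (x := p)).sub hzp).norm).mul
      ((tendsto_const_nhds (x := ‖p‖ + R)).add hzp.norm)
  obtain ⟨k, hk⟩ := (hclose.eventually_lt_const (half_pos hε)).exists
  set s : ℝ := 1 / ((k : ℝ) + 1)
  have hs : 0 < s := by positivity
  have hfar : Tendsto (fun n => ‖u n - T (u n)‖ * (‖z k‖ + R) / s) atTop (𝓝 0) := by
    simpa using (hres.mul_const (‖z k‖ + R)).div_const s
  filter_upwards [hfar.eventually_lt_const (half_pos hε)] with n hn
  have hzu : ‖z k - u n‖ ≤ ‖z k‖ + R := (_root_.norm_sub_le _ _).trans (by linarith [hu n])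
  have hpu : ‖p - u n‖ ≤ ‖p‖ + R := (_root_.norm_sub_le _ _).trans (by linarith [hu n])
  have hnear : ⟪z k, z k - u n⟫ ≤ ‖u n - T (u n)‖ * (‖z k‖ + R) / s := by
    rw [le_div_iff₀ hs, mul_comm]
    exact (hT.inner_le_of_map_eq_one_add_smul (hz k) (u n)).trans
      (mul_le_mul_of_nonneg_left hzu (norm_nonneg _))
  have hsplit : ⟪p, p - u n⟫ = ⟪z k, z k - u n⟫ + ⟪p - z k, p - u n⟫ + ⟪z k, p - z k⟫ := by
    simp only [inner_sub_left, inner_sub_right]; ring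
  have herr : ⟪p - z k, p - u n⟫ + ⟪z k, p - z k⟫ ≤ ‖p - z k‖ * (‖p‖ + R + ‖z k‖) := by
    have h₁ := (real_inner_le_norm (p - z k) (p - u n)).trans
      (mul_le_mul_of_nonneg_left hpu (norm_nonneg _))
    have h₂ := real_inner_le_norm (z k) (p - z k)
    linarith
  linarith

theorem norm_smul_sub_sq_le {β : ℝ} (hβ₀ : 0 ≤ β) (hβ₁ : β ≤ 1) (v p : H) :
    ‖β • v - p‖ ^ 2 ≤ β * ‖v - p‖ ^ 2 + (1 - β) * (2 * ⟪p, p - β • v⟫) := by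
  have hsum : β • (v - p) + (1 - β) • (-p) = β • v - p := by module
  have hkey : ‖β • v - p‖ ^ 2 + ‖(1 - β) • (-p)‖ ^ 2
      = ‖β • (v - p)‖ ^ 2 + 2 * ⟪(1 - β) • (-p), β • v - p⟫ := by
    rw [← hsum, norm_add_sq_real, inner_add_right, real_inner_self_eq_norm_sq, real_inner_comm]
    ring
  have hcross : ⟪(1 - β) • (-p), β • v - p⟫ = (1 - β) * ⟪p, p - β • v⟫ := by
    rw [real_inner_smul_left, inner_neg_left, ← inner_neg_right, neg_sub]
  have hfirst : ‖β • (v - p)‖ ^ 2 ≤ β * ‖v - p‖ ^ 2 := by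
    rw [norm_smul, Real.norm_of_nonneg hβ₀, mul_pow]
    exact mul_le_mul_of_nonneg_right (pow_le_of_le_one hβ₀ hβ₁ two_ne_zero) (sq_nonneg _)
  nlinarith [sq_nonneg ‖(1 - β) • (-p)‖]

end Nonexpansive

theorem LipschitzWith.tendsto_of_tikhonov_relax {H : Type*} [NormedAddCommGroup H]
    [InnerProductSpace ℝ H] [CompleteSpace H] {T : H → H} (hT : LipschitzWith 1 T) {p : H}
    (hp : T p = p) (hpmin : ∀ q, T q = q → ‖p‖ ≤ ‖q‖) {β : ℕ → ℝ}
    (hβ : ∀ n, 0 ≤ β n ∧ β n ≤ 1) (hβ_lim : Tendsto β atTop (𝓝 1))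
    (hβ_div : ¬ Summable fun n => 1 - β n) (hβ_var : Summable fun n => |β (n + 1) - β n|)
    {α : ℕ → ℝ} (hα : ∀ n, 0 ≤ α n ∧ α n ≤ 1) {δ : ℝ} (hδ : 0 < δ)
    (hαδ : ∀ᶠ n in atTop, δ ≤ α n) (hα_var : Summable fun n => |α (n + 1) - α n|)
    {x : ℕ → H} (hx : ∀ n, x (n + 1) = relax T (α n) (β n • x n)) :
    Tendsto x atTop (𝓝 p) := by
  have hw_le : ∀ n, ‖β n • x n‖ ≤ max ‖x 0 - p‖ ‖p‖ + ‖p‖ := fun n => by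
    rw [norm_smul, Real.norm_of_nonneg (hβ n).1]
    exact (mul_le_of_le_one_left (norm_nonneg _) (hβ n).2).trans
      (norm_le_of_tikhonov_relax hT hp hβ hα hx n)
  have hvi := hT.eventually_inner_sub_le hp hpmin hw_le
    (tendsto_norm_sub_map_of_tikhonov_relax hT hp hβ hα hx hβ_lim hβ_div hβ_var hα_var hδ hαδ)
  have hsq : Tendsto (fun n => ‖x n - p‖ ^ 2) atTop (𝓝 0) := by
    refine tendsto_zero_of_le_one_sub_mul_add_s13 (t := fun n => 1 - β n)
      (b := fun n => 2 * ⟪p, p - β n • x n⟫) (c := 0) (fun n => sq_nonneg _)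
      (fun n => sub_nonneg.2 (hβ n).2) (fun n => by linarith [(hβ n).1]) hβ_div
      (fun ε hε => (hvi (ε / 2) (half_pos hε)).mono fun n hn => by linarith)
      (fun n => le_rfl) summable_zero fun n => ?_
    rw [Pi.zero_apply, add_zero, sub_sub_cancel]
    exact (pow_le_pow_left₀ (norm_nonneg _)
      (norm_succ_sub_le_of_tikhonov_relax hT hp hα hx n) 2).trans
      (norm_smul_sub_sq_le (hβ n).1 (hβ n).2 (x n) p)
  rw [tendsto_iff_norm_sub_tendsto_zero]
  simpa [Real.sqrt_sq (norm_nonneg _)] using hsq.sqrt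

def reflection {E : Type*} [AddCommGroup E] [Module ℝ E] (J : E → E) (v : E) : E :=
  (2 : ℝ) • J v - v

section Resolvent

variable {H : Type*} [NormedAddCommGroup H] [InnerProductSpace ℝ H] {A : H → Set H} {γ : ℝ}
  {J : H → H}

theorem MonotoneOp.norm_resolvent_sub_sq_le (hA : MonotoneOp A) (hγ : 0 ≤ γ)
    (hJ : ∀ x, x - J x ∈ γ • A (J x)) (u v : H) :
    ‖J u - J v‖ ^ 2 ≤ ⟪u - v, J u - J v⟫ := by
  obtain ⟨a, ha, hua⟩ := Set.mem_smul_set.1 (hJ u)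
  obtain ⟨b, hb, hvb⟩ := Set.mem_smul_set.1 (hJ v)
  have hrw : u - v = (J u - J v) + γ • (a - b) := by rw [smul_sub, hua, hvb]; abel
  have hmono : 0 ≤ ⟪J u - J v, a - b⟫ := hA _ _ _ _ ha hb
  rw [hrw, inner_add_left, real_inner_self_eq_norm_sq, real_inner_smul_left, real_inner_comm]
  nlinarith

theorem MonotoneOp.lipschitzWith_reflection (hA : MonotoneOp A) (hγ : 0 ≤ γ)
    (hJ : ∀ x, x - J x ∈ γ • A (J x)) : LipschitzWith 1 (reflection J) := by
  refine LipschitzWith.of_dist_le_mul fun u v => ?_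
  rw [NNReal.coe_one, one_mul, dist_eq_norm, dist_eq_norm]
  refine le_of_pow_le_pow_left₀ two_ne_zero (norm_nonneg _) ?_
  have hfirm := hA.norm_resolvent_sub_sq_le hγ hJ u v
  have hrw : reflection J u - reflection J v = (2 : ℝ) • (J u - J v) - (u - v) := by
    simp only [reflection]; module
  rw [hrw, norm_sub_sq_real, norm_smul, real_inner_smul_left, real_inner_comm, Real.norm_two]
  nlinarith

theorem MonotoneOp.lipschitzWith_resolvent (hA : MonotoneOp A) (hγ : 0 ≤ γ)
    (hJ : ∀ x, x - J x ∈ γ • A (J x)) : LipschitzWith 1 J := by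
  refine LipschitzWith.of_dist_le_mul fun u v => ?_
  rw [NNReal.coe_one, one_mul, dist_eq_norm, dist_eq_norm]
  have hrw : J u - J v = (2 : ℝ)⁻¹ • ((u - v) + (reflection J u - reflection J v)) := by
    simp only [reflection]; module
  rw [hrw, norm_smul, Real.norm_of_nonneg (by norm_num)]
  have := (hA.lipschitzWith_reflection hγ hJ).norm_map_sub_le u v
  linarith [norm_add_le (u - v) (reflection J u - reflection J v)]

end Resolvent

section DouglasRachford

variable {E : Type*} [AddCommGroup E] [Module ℝ E] {JA JB : E → E}

theorem relax_reflection_comp_reflection (l : ℝ) (w : E) :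
    relax (reflection JA ∘ reflection JB) (l / 2) w
      = w + l • (JA (reflection JB w) - JB w) := by
  simp only [relax, reflection, Function.comp_apply]; module

theorem resolvent_eq_of_reflection_reflection_eq {q : E}
    (hq : reflection JA (reflection JB q) = q) : JA (reflection JB q) = JB q := by
  refine smul_right_injective E (two_ne_zero (α := ℝ)) ?_
  calc (2 : ℝ) • JA (reflection JB q) = q + reflection JB q := eq_add_of_sub_eq hq
    _ = (2 : ℝ) • JB q := by rw [reflection]; abel

theorem exists_mem_neg_mem_of_reflection_reflection_eq {A B : E → Set E} {γ : ℝ} (hγ : γ ≠ 0)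
    (hJA : ∀ x, x - JA x ∈ γ • A (JA x)) (hJB : ∀ x, x - JB x ∈ γ • B (JB x)) {q : E}
    (hq : reflection JA (reflection JB q) = q) : ∃ a ∈ A (JB q), -a ∈ B (JB q) := by
  have hfix := resolvent_eq_of_reflection_reflection_eq hq
  obtain ⟨a, ha, hqa⟩ := Set.mem_smul_set.1 (hJA (reflection JB q))
  obtain ⟨b, hb, hqb⟩ := Set.mem_smul_set.1 (hJB q)
  rw [hfix] at ha hqa
  have hab : γ • (a + b) = 0 := by
    rw [smul_add, hqa, hqb, reflection]; module
  rw [(smul_eq_zero.1 hab).resolve_left hγ |> eq_neg_of_add_eq_zero_left] at ha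
  exact ⟨-b, ha, by rwa [neg_neg]⟩

end DouglasRachford

theorem douglasRachford_tikhonov_strong_convergence_general
    {H : Type*} [NormedAddCommGroup H] [InnerProductSpace ℝ H] [CompleteSpace H]
    (A B : H → Set H) (hA : MaximallyMonotoneOp A) (hB : MaximallyMonotoneOp B)
    (γ : ℝ) (hγ : 0 < γ)
    (JA JB : H → H)
    (hJA : ∀ x : H, x - JA x ∈ γ • A (JA x))
    (hJB : ∀ x : H, x - JB x ∈ γ • B (JB x))
    (β lam : ℕ → ℝ)
    (hβ : ∀ n, 0 < β n ∧ β n ≤ 1)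
    (hβlim : Tendsto β atTop (nhds 1))
    (hβdiv : ¬ Summable (fun n => 1 - β n))
    (hβvar : Summable (fun n => |β (n + 1) - β n|))
    (hlam : ∀ n, 0 < lam n ∧ lam n ≤ 2)
    (hlaminf : 0 < Filter.liminf lam Filter.atTop)
    (hlamvar : Summable (fun n => |lam (n + 1) - lam n|))
    (x y z : ℕ → H)
    (hy : ∀ n, y n = JB (β n • x n))
    (hz : ∀ n, z n = JA ((2 : ℝ) • y n - β n • x n))
    (hx : ∀ n, x (n + 1) = β n • x n + lam n • (z n - y n))
    (xbar : H)
    (hxbar : ((2 : ℝ) • JA ((2 : ℝ) • JB xbar - xbar) - ((2 : ℝ) • JB xbar - xbar)) = xbar)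
    (hxbarmin : ∀ q : H,
      ((2 : ℝ) • JA ((2 : ℝ) • JB q - q) - ((2 : ℝ) • JB q - q)) = q → ‖xbar‖ ≤ ‖q‖) :
    Tendsto x atTop (nhds xbar) ∧
      Tendsto y atTop (nhds (JB xbar)) ∧
      Tendsto z atTop (nhds (JB xbar)) ∧
      (∃ a ∈ A (JB xbar), -a ∈ B (JB xbar)) := by
  have hRA := hA.1.lipschitzWith_reflection hγ.le hJA
  have hRB := hB.1.lipschitzWith_reflection hγ.le hJB
  have hT : LipschitzWith 1 (reflection JA ∘ reflection JB) := by
    simpa only [mul_one] using hRA.comp hRB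
  have hlam_ev : ∀ᶠ n in atTop, liminf lam atTop / 2 < lam n :=
    eventually_lt_of_lt_liminf (half_lt_self hlaminf)
      (isBoundedUnder_of ⟨0, fun n => (hlam n).1.le⟩)
  have hx_conv : Tendsto x atTop (𝓝 xbar) :=
    hT.tendsto_of_tikhonov_relax hxbar hxbarmin (fun n => ⟨(hβ n).1.le, (hβ n).2⟩) hβlim hβdiv
      hβvar (α := fun n => lam n / 2)
      (fun n => ⟨by linarith [(hlam n).1], by linarith [(hlam n).2]⟩)
      (δ := liminf lam atTop / 4) (by positivity) (hlam_ev.mono fun n hn => by linarith)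
      ((hlamvar.div_const 2).congr fun n => by rw [← sub_div, abs_div, abs_two])
      fun n => by rw [relax_reflection_comp_reflection, hx, hz, hy]; rfl
  have hw_conv : Tendsto (fun n => β n • x n) atTop (𝓝 xbar) := by
    simpa using hβlim.smul hx_conv
  refine ⟨hx_conv, ?_, ?_, exists_mem_neg_mem_of_reflection_reflection_eq hγ.ne' hJA hJB hxbar⟩
  · rw [show y = JB ∘ fun n => β n • x n from funext hy]
    exact ((hB.1.lipschitzWith_resolvent hγ.le hJB).continuous.tendsto xbar).comp hw_conv
  · rw [show z = JA ∘ reflection JB ∘ fun n => β n • x n from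
      funext fun n => by rw [hz, hy]; rfl, ← resolvent_eq_of_reflection_reflection_eq hxbar]
    exact ((hA.1.lipschitzWith_resolvent hγ.le hJA).continuous.tendsto _).comp
      ((hRB.continuous.tendsto xbar).comp hw_conv)

/-- Strong convergence of the Douglas–Rachford algorithm with Tikhonov
regularization terms: with `JA, JB` the resolvents of `γ A` and `γ B` and the
iteration `y n = JB (β n • x n)`, `z n = JA (2 • y n - β n • x n)`,
`x (n+1) = β n • x n + λ n • (z n - y n)`, the sequence `(x n)` converges
strongly to the minimal norm fixed point `x̄` of the composition of reflected
resolvents `R_{γA} ∘ R_{γB}`, while `(y n)` and `(z n)` converge strongly to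
`JB x̄`, which is a zero of `A + B`. -/
theorem douglasRachford_tikhonov_strong_convergence
    {H : Type*} [NormedAddCommGroup H] [InnerProductSpace ℝ H] [CompleteSpace H]
    (A B : H → Set H) (hA : MaximallyMonotoneOp A) (hB : MaximallyMonotoneOp B)
    (γ : ℝ) (hγ : 0 < γ)
    (JA JB : H → H)
    (hJA : ∀ x : H, x - JA x ∈ γ • A (JA x))
    (hJB : ∀ x : H, x - JB x ∈ γ • B (JB x))
    (hzer_ne : {z : H | ∃ a ∈ A z, -a ∈ B z}.Nonempty)
    (β lam : ℕ → ℝ)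
    (hβ : ∀ n, 0 < β n ∧ β n ≤ 1)
    (hβlim : Tendsto β atTop (nhds 1))
    (hβdiv : ¬ Summable (fun n => 1 - β n))
    (hβvar : Summable (fun n => |β (n + 1) - β n|))
    (hlam : ∀ n, 0 < lam n ∧ lam n ≤ 2)
    (hlaminf : 0 < Filter.liminf lam Filter.atTop)
    (hlamvar : Summable (fun n => |lam (n + 1) - lam n|))
    (x y z : ℕ → H)
    (hy : ∀ n, y n = JB (β n • x n))
    (hz : ∀ n, z n = JA ((2 : ℝ) • y n - β n • x n))
    (hx : ∀ n, x (n + 1) = β n • x n + lam n • (z n - y n))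
    (xbar : H)
    (hxbar : ((2 : ℝ) • JA ((2 : ℝ) • JB xbar - xbar) - ((2 : ℝ) • JB xbar - xbar)) = xbar)
    (hxbarmin : ∀ q : H,
      ((2 : ℝ) • JA ((2 : ℝ) • JB q - q) - ((2 : ℝ) • JB q - q)) = q → ‖xbar‖ ≤ ‖q‖) :
    Tendsto x atTop (nhds xbar) ∧
      Tendsto y atTop (nhds (JB xbar)) ∧
      Tendsto z atTop (nhds (JB xbar)) ∧
      (∃ a ∈ A (JB xbar), -a ∈ B (JB xbar)) :=
  douglasRachford_tikhonov_strong_convergence_general A B hA hB γ hγ JA JB hJA hJB β lam hβ hβlim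
    hβdiv hβvar hlam hlaminf hlamvar x y z hy hz hx xbar hxbar hxbarmin
end
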